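/- arXiv:1312.0255 — 8 statements merged into one kernel-verified Lean document; each statement's English description precedes it below -/
import Mathlib

section
/- Let q be a real number with 0 < q < 1, let h be an integer with h ≥ 1, let x be a real number, and let n be a natural number. Then the series Σ_{l=0}^∞ (-1)^l q^{hl} [x+l]_q^n is summable and G_{n+1}^{(h)}(x|q)/(n+1) = (1+q) · Σ_{l=0}^∞ (-1)^l q^{hl} [x+l]_q^n. -/
/-- The q-analogue of a real number `x`: `[x]_q = (1 - q^x)/(1 - q)`,
where `q^x` is a real power of the positive base `q`. -/
noncomputable def qnum (q x : ℝ) : ℝ := (1 - q ^ x) / (1 - q)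

/-- The (h,q)-Genocchi polynomial `G_m^{(h)}(x|q)`: `G_0^{(h)}(x|q) = 0` and for `m ≥ 1`,
`G_m^{(h)}(x|q) = m (1+q)/(1-q)^{m-1} ∑_{k=0}^{m-1} C(m-1,k) (-1)^k q^{kx}/(1+q^{h+k})`,
with real powers of the positive base `q`. -/
noncomputable def hqGenocchi (h : ℤ) (q : ℝ) (m : ℕ) (x : ℝ) : ℝ :=
  if m = 0 then 0
  else (m : ℝ) * (1 + q) / (1 - q) ^ (m - 1) *
    ∑ k ∈ Finset.range m, ((m - 1).choose k : ℝ) * (-1 : ℝ) ^ k *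
      q ^ ((k : ℝ) * x) / (1 + q ^ ((h : ℝ) + (k : ℝ)))

/-!
Expanding `[x+l]_q^n = (1-q)^{-n} ∑_k C(n,k) (-1)^k q^{k(x+l)}` by the binomial theorem turns
the `l`-th term of the series into `∑_k c_k (-q^{h+k})^l`, a finite combination of geometric
sequences with ratios of absolute value `q^{h+k} < 1`. Summing each of them over `l` gives
`∑_k c_k / (1 + q^{h+k})`, which is the defining finite sum of `G_{n+1}^{(h)}(x|q)`.
-/

open Finset

theorem hasSum_sum_mul_geometric {ι 𝕜 : Type*} [NormedDivisionRing 𝕜] [CompleteSpace 𝕜]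
    (s : Finset ι) (c r : ι → 𝕜) (hr : ∀ k ∈ s, ‖r k‖ < 1) :
    HasSum (fun l : ℕ => ∑ k ∈ s, c k * r k ^ l) (∑ k ∈ s, c k * (1 - r k)⁻¹) :=
  hasSum_sum fun k hk => (hasSum_geometric_of_norm_lt_one (hr k hk)).mul_left (c k)

theorem qnum_pow_eq_sum {q : ℝ} (hq : 0 ≤ q) (y : ℝ) (n : ℕ) :
    qnum q y ^ n = ∑ k ∈ range (n + 1),
      (n.choose k : ℝ) * (-1) ^ k * q ^ ((k : ℝ) * y) / (1 - q) ^ n := by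
  rw [qnum, div_pow, sub_eq_add_neg, add_comm, add_pow, sum_div]
  refine sum_congr rfl fun k _ => ?_
  rw [neg_pow, ← Real.rpow_natCast (q ^ y), ← Real.rpow_mul hq, mul_comm y]
  ring

theorem neg_one_pow_mul_rpow_mul_rpow {q : ℝ} (hq : 0 < q) (h x : ℝ) (k l : ℕ) :
    (-1) ^ l * q ^ (h * l) * q ^ ((k : ℝ) * (x + l)) = q ^ ((k : ℝ) * x) * (-q ^ (h + k)) ^ l := by
  rw [neg_pow (q ^ (h + k)), ← Real.rpow_natCast (q ^ (h + k)), ← Real.rpow_mul hq.le,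
    mul_add, Real.rpow_add hq, add_mul, Real.rpow_add hq, mul_comm (k : ℝ) l]
  ring

theorem neg_one_pow_mul_rpow_mul_qnum_pow {q : ℝ} (hq : 0 < q) (h x : ℝ) (n l : ℕ) :
    (-1) ^ l * q ^ (h * l) * qnum q (x + l) ^ n = ∑ k ∈ range (n + 1),
      (n.choose k : ℝ) * (-1) ^ k * q ^ ((k : ℝ) * x) / (1 - q) ^ n * (-q ^ (h + k)) ^ l := by
  rw [qnum_pow_eq_sum hq.le, mul_sum]
  refine sum_congr rfl fun k _ => ?_
  have := neg_one_pow_mul_rpow_mul_rpow hq h x k l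
  linear_combination (n.choose k : ℝ) * (-1) ^ k / (1 - q) ^ n * this

theorem hasSum_neg_one_pow_mul_rpow_mul_qnum_pow {q : ℝ} (hq0 : 0 < q) (hq1 : q < 1) {h : ℝ}
    (hh : 0 < h) (x : ℝ) (n : ℕ) :
    HasSum (fun l : ℕ => (-1) ^ l * q ^ (h * l) * qnum q (x + l) ^ n)
      (∑ k ∈ range (n + 1),
        (n.choose k : ℝ) * (-1) ^ k * q ^ ((k : ℝ) * x) / (1 - q) ^ n / (1 + q ^ (h + k))) := by
  have hr : ∀ k ∈ range (n + 1), ‖-q ^ (h + k)‖ < 1 := fun k _ => by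
    rw [norm_neg, Real.norm_of_nonneg (by positivity)]
    exact Real.rpow_lt_one hq0.le hq1 (by positivity)
  simpa only [neg_one_pow_mul_rpow_mul_qnum_pow hq0, sub_neg_eq_add, div_eq_mul_inv]
    using hasSum_sum_mul_geometric _ _ _ hr

theorem hqGenocchi_succ_div (h : ℤ) (q x : ℝ) (n : ℕ) :
    hqGenocchi h q (n + 1) x / (n + 1) = (1 + q) * ∑ k ∈ range (n + 1),
      (n.choose k : ℝ) * (-1) ^ k * q ^ ((k : ℝ) * x) / (1 - q) ^ n / (1 + q ^ ((h : ℝ) + k)) := by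
  rw [hqGenocchi, if_neg n.succ_ne_zero, Nat.add_sub_cancel, mul_sum, mul_sum, sum_div]
  refine sum_congr rfl fun k _ => ?_
  push_cast
  field_simp

theorem statement0 (q : ℝ) (hq0 : 0 < q) (hq1 : q < 1) (h : ℤ) (hh : 1 ≤ h)
    (x : ℝ) (n : ℕ) :
    Summable (fun l : ℕ => (-1 : ℝ) ^ l * q ^ ((h : ℝ) * (l : ℝ)) * (qnum q (x + l)) ^ n) ∧
    hqGenocchi h q (n + 1) x / (n + 1) =
      (1 + q) * ∑' l : ℕ, (-1 : ℝ) ^ l * q ^ ((h : ℝ) * (l : ℝ)) * (qnum q (x + l)) ^ n := by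
  have hsum := hasSum_neg_one_pow_mul_rpow_mul_qnum_pow hq0 hq1
    (by exact_mod_cast hh : (0 : ℝ) < h) x n
  exact ⟨hsum.summable, by rw [hsum.tsum_eq, hqGenocchi_succ_div]⟩
end

section
/- Let q be a real number with q > 0 and q ≠ 1, let h be an integer with h ≥ 1, let x be a real number, and let n be a natural number. Then G_n^{(h)}(x|q) = Σ_{k=0}^{n} binom(n,k) · q^{(k-1)x} · G_k^{(h)}(q) · [x]_q^{n-k}. -/
/-!
With `t = q^x` and `[x]_q = (1 - t)/(1 - q)`, the powers of `1 - q` on the right-hand side combine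
into those of `G_n^{(h)}(x|q)`, and `k C(n,k) = n C(n-1,k-1)` reduces the claim to the Bernstein
expansion `∑_k C(N,k) t^k (1-t)^(N-k) ∑_j C(k,j) a_j = ∑_j C(N,j) a_j t^j`
of the polynomial with coefficients `a_j = (-1)^j / (1 + q^(h+j))`.
That expansion follows from `C(N,k) C(k,j) = C(N,j) C(N-j,k-j)` and the binomial theorem for
`(t + (1 - t))^(N-j)`.
-/

open Finset

section Bernstein

variable {R : Type*} [CommRing R]

theorem sum_choose_mul_choose_mul_pow_mul_one_sub_pow (N j : ℕ) (t : R) :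
    ∑ k ∈ range (N + 1), (N.choose k * k.choose j : R) * t ^ k * (1 - t) ^ (N - k) =
      N.choose j * t ^ j := by
  rcases lt_or_ge N j with hNj | hjN
  · rw [Nat.choose_eq_zero_of_lt hNj, Nat.cast_zero, zero_mul]
    refine sum_eq_zero fun k hk => ?_
    rw [Nat.choose_eq_zero_of_lt (n := k) (by grind), Nat.cast_zero, mul_zero, zero_mul, zero_mul]
  obtain ⟨M, rfl⟩ := Nat.exists_eq_add_of_le hjN
  have below_j : ∀ k ∈ range j,
      (((j + M).choose k * k.choose j : ℕ) : R) * t ^ k * (1 - t) ^ (j + M - k) = 0 := by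
    intro k hk
    rw [Nat.choose_eq_zero_of_lt (mem_range.1 hk), mul_zero, Nat.cast_zero, zero_mul, zero_mul]
  have from_j : ∀ i ∈ range (M + 1),
      (((j + M).choose (j + i) * (j + i).choose j : ℕ) : R) * t ^ (j + i) *
          (1 - t) ^ (j + M - (j + i)) =
        (j + M).choose j * t ^ j * (t ^ i * (1 - t) ^ (M - i) * M.choose i) := by
    intro i _
    rw [Nat.choose_mul (Nat.le_add_right j i), Nat.add_sub_cancel_left, Nat.add_sub_cancel_left,
      Nat.add_sub_add_left]
    push_cast
    ring
  push_cast at below_j from_j ⊢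
  rw [add_assoc, sum_range_add, sum_eq_zero below_j, zero_add, sum_congr rfl from_j, ← mul_sum,
    ← add_pow, add_sub_cancel, one_pow, mul_one]

theorem sum_bernstein_mul_sum_choose (N : ℕ) (a : ℕ → R) (t : R) :
    ∑ k ∈ range (N + 1), (N.choose k : R) * t ^ k * (1 - t) ^ (N - k) *
        ∑ j ∈ range (k + 1), (k.choose j : R) * a j =
      ∑ j ∈ range (N + 1), (N.choose j : R) * a j * t ^ j := by
  have extend : ∀ k ∈ range (N + 1), ∑ j ∈ range (k + 1), (k.choose j : R) * a j =
      ∑ j ∈ range (N + 1), (k.choose j : R) * a j := by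
    intro k hk
    refine sum_subset (range_subset_range.2 (by simpa using hk)) fun j _ hj => ?_
    rw [Nat.choose_eq_zero_of_lt (by simpa using hj), Nat.cast_zero, zero_mul]
  rw [sum_congr rfl fun k hk => by rw [extend k hk, mul_sum], sum_comm]
  refine sum_congr rfl fun j _ => ?_
  rw [mul_right_comm, ← sum_choose_mul_choose_mul_pow_mul_one_sub_pow N j t, sum_mul]
  refine sum_congr rfl fun k _ => ?_
  ring

end Bernstein

noncomputable def hqGenocchiCoeff (h : ℤ) (q : ℝ) (j : ℕ) : ℝ :=
  (-1) ^ j / (1 + q ^ ((h : ℝ) + j))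

theorem hqGenocchi_succ {q : ℝ} (hq : 0 ≤ q) (h : ℤ) (m : ℕ) (x : ℝ) :
    hqGenocchi h q (m + 1) x = (m + 1) * (1 + q) / (1 - q) ^ m *
      ∑ j ∈ range (m + 1), (m.choose j : ℝ) * hqGenocchiCoeff h q j * (q ^ x) ^ j := by
  rw [hqGenocchi, if_neg m.succ_ne_zero, Nat.add_sub_cancel]
  push_cast
  congr 1
  refine sum_congr rfl fun j _ => ?_
  rw [hqGenocchiCoeff, mul_comm (j : ℝ), Real.rpow_mul hq, Real.rpow_natCast]
  ring

theorem choose_mul_rpow_mul_hqGenocchi_mul_qnum_pow {q : ℝ} (hq : 0 ≤ q) (h : ℤ) (x : ℝ)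
    {N i : ℕ} (hiN : i ≤ N) :
    ((N + 1).choose (i + 1) : ℝ) * q ^ ((((i + 1 : ℕ) : ℝ) - 1) * x) *
        hqGenocchi h q (i + 1) 0 * qnum q x ^ (N + 1 - (i + 1)) =
      (N + 1) * (1 + q) / (1 - q) ^ N * ((N.choose i : ℝ) * (q ^ x) ^ i * (1 - q ^ x) ^ (N - i) *
        ∑ j ∈ range (i + 1), (i.choose j : ℝ) * hqGenocchiCoeff h q j) := by
  have choose_succ : ((N + 1).choose (i + 1) : ℝ) * (i + 1) = (N + 1) * N.choose i := by
    exact_mod_cast (Nat.add_one_mul_choose_eq N i).symm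
  have pow_split : (1 - q) ^ N = (1 - q) ^ i * (1 - q) ^ (N - i) := by
    rw [← pow_add, Nat.add_sub_cancel' hiN]
  rw [hqGenocchi_succ hq, Real.rpow_zero, Nat.add_sub_add_right, qnum, div_pow, pow_split,
    Nat.cast_succ, add_sub_cancel_right, mul_comm (i : ℝ), Real.rpow_mul hq, Real.rpow_natCast]
  simp only [one_pow, mul_one]
  linear_combination (1 + q) / (1 - q) ^ i / (1 - q) ^ (N - i) * (q ^ x) ^ i *
    (1 - q ^ x) ^ (N - i) * (∑ j ∈ range (i + 1), (i.choose j : ℝ) * hqGenocchiCoeff h q j) *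
      choose_succ

theorem statement1_general (q : ℝ) (hq0 : 0 < q) (h : ℤ)
    (x : ℝ) (n : ℕ) :
    hqGenocchi h q n x =
      ∑ k ∈ Finset.range (n + 1), (n.choose k : ℝ) * q ^ (((k : ℝ) - 1) * x) *
        hqGenocchi h q k 0 * (qnum q x) ^ (n - k) := by
  cases n with
  | zero => simp [hqGenocchi]
  | succ N =>
    rw [sum_range_succ', sum_congr rfl fun i hi => choose_mul_rpow_mul_hqGenocchi_mul_qnum_pow
      hq0.le h x (Nat.lt_succ_iff.1 (mem_range.1 hi)), ← mul_sum, sum_bernstein_mul_sum_choose,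
      hqGenocchi_succ hq0.le]
    simp [hqGenocchi]

theorem statement1 (q : ℝ) (hq0 : 0 < q) (hq1 : q ≠ 1) (h : ℤ) (hh : 1 ≤ h)
    (x : ℝ) (n : ℕ) :
    hqGenocchi h q n x =
      ∑ k ∈ Finset.range (n + 1), (n.choose k : ℝ) * q ^ (((k : ℝ) - 1) * x) *
        hqGenocchi h q k 0 * (qnum q x) ^ (n - k) :=
  statement1_general q hq0 h x n
end

section
/- Let q be a real number with q > 0 and q ≠ 1, let h be an integer with h ≥ 1, and let n be a natural number. Then q^{h-1} · Σ_{k=0}^{n} binom(n,k) · q^{k} · G_k^{(h)}(q) + G_n^{(h)}(q) equals 1+q if n = 1, and equals 0 if n ≠ 1. -/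
/-! Multiplying by `(1 - q)^(n - 1)` clears the denominators of the Genocchi numbers. Since
`k C(n,k) = n C(n-1,k-1)`, the sum over `k` then becomes a binomial average, with weights
`q^m (1-q)^(n-1-m)`, of the alternating binomial transforms of `a_j = 1/(1+q^(h+j))`; exchanging the
two sums and applying the binomial theorem to `q + (1 - q) = 1` turns it into
`∑_j C(n-1,j) (-1)^j q^(j+1) a_j`. Since `q^(h-1) q^(j+1) a_j + a_j = 1`, what remains is the
alternating sum `∑_j C(n-1,j) (-1)^j`, which vanishes unless `n = 1`. -/

open Finset

lemma sum_choose_mul_pow_mul_sum_choose {R : Type*} [CommSemiring R] (x y : R) (c : ℕ → R)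
    (N : ℕ) :
    ∑ m ∈ range (N + 1), (N.choose m : R) * x ^ m * y ^ (N - m) *
        ∑ j ∈ range (m + 1), (m.choose j : R) * c j =
      ∑ j ∈ range (N + 1), (N.choose j : R) * x ^ j * (x + y) ^ (N - j) * c j := by
  let f : ℕ → ℕ → R := fun j i =>
    (N.choose (j + i) * (j + i).choose j : ℕ) * x ^ (j + i) * y ^ (N - (j + i)) * c j
  have hflip := sum_range_diag_flip (N + 1) f
  calc _ = ∑ m ∈ range (N + 1), ∑ j ∈ range (m + 1), f j (m - j) := by
        refine sum_congr rfl fun m _ => ?_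
        rw [mul_sum]
        refine sum_congr rfl fun j hj => ?_
        simp only [f, Nat.add_sub_cancel' (Nat.lt_succ_iff.mp (mem_range.mp hj))]
        push_cast
        ring
    _ = ∑ j ∈ range (N + 1), ∑ i ∈ range (N + 1 - j), f j i := hflip
    _ = _ := by
        refine sum_congr rfl fun j hj => ?_
        have hjN : j ≤ N := Nat.lt_succ_iff.mp (mem_range.mp hj)
        rw [Nat.succ_sub hjN, (Commute.all x y).add_pow, mul_sum, sum_mul]
        refine sum_congr rfl fun i _ => ?_
        have hchoose := Nat.choose_mul (n := N) (k := j + i) (s := j) (Nat.le_add_right j i)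
        simp only [f, hchoose, Nat.add_sub_cancel_left, Nat.sub_sub]
        push_cast
        ring

section Genocchi

variable (h : ℤ) {q : ℝ}

lemma hqGenocchi_succ_zero (m : ℕ) :
    hqGenocchi h q (m + 1) 0 = (m + 1) * (1 + q) / (1 - q) ^ m *
      ∑ j ∈ range (m + 1), (m.choose j : ℝ) * (-1) ^ j / (1 + q ^ ((h : ℝ) + j)) := by
  simp [hqGenocchi]

lemma one_sub_pow_mul_hqGenocchi_succ (hq1 : q ≠ 1) {m N : ℕ} (hmN : m ≤ N) :
    (1 - q) ^ N * hqGenocchi h q (m + 1) 0 = (1 - q) ^ (N - m) * ((m + 1) * (1 + q) *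
      ∑ j ∈ range (m + 1), (m.choose j : ℝ) * (-1) ^ j / (1 + q ^ ((h : ℝ) + j))) := by
  have hq : (1 - q) ^ m ≠ 0 := pow_ne_zero m (sub_ne_zero.mpr hq1.symm)
  rw [hqGenocchi_succ_zero, ← Nat.sub_add_cancel hmN, pow_add, Nat.add_sub_cancel]
  field_simp

lemma one_sub_pow_mul_sum_choose_mul_hqGenocchi (hq1 : q ≠ 1) (N : ℕ) :
    (1 - q) ^ N * ∑ k ∈ range (N + 2), ((N + 1).choose k : ℝ) * q ^ k * hqGenocchi h q k 0 =
      (N + 1) * (1 + q) * ∑ j ∈ range (N + 1),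
        (N.choose j : ℝ) * (-1) ^ j * q ^ (j + 1) / (1 + q ^ ((h : ℝ) + j)) := by
  have key := sum_choose_mul_pow_mul_sum_choose q (1 - q)
    (fun j => (-1) ^ j / (1 + q ^ ((h : ℝ) + j))) N
  simp only [add_sub_cancel, one_pow, mul_one] at key
  calc _ = ∑ m ∈ range (N + 1), (N + 1) * (1 + q) * q * ((N.choose m : ℝ) * q ^ m *
          (1 - q) ^ (N - m) * ∑ j ∈ range (m + 1),
            (m.choose j : ℝ) * ((-1) ^ j / (1 + q ^ ((h : ℝ) + j)))) := by
        rw [sum_range_succ', hqGenocchi, if_pos rfl, mul_zero, add_zero, mul_sum]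
        refine sum_congr rfl fun m hm => ?_
        have hchoose : ((N + 1).choose (m + 1) : ℝ) * (m + 1) = (N + 1) * N.choose m := by
          exact_mod_cast (Nat.add_one_mul_choose_eq N m).symm
        rw [mul_left_comm,
          one_sub_pow_mul_hqGenocchi_succ h hq1 (Nat.lt_succ_iff.mp (mem_range.mp hm))]
        simp only [mul_div_assoc]
        linear_combination (q ^ (m + 1) * (1 - q) ^ (N - m) * (1 + q) * ∑ j ∈ range (m + 1),
          (m.choose j : ℝ) * ((-1) ^ j / (1 + q ^ ((h : ℝ) + j)))) * hchoose
    _ = _ := by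
        rw [← mul_sum, key, mul_sum, mul_sum]
        refine sum_congr rfl fun j _ => ?_
        ring

end Genocchi

lemma sum_range_choose_mul_neg_one_pow {R : Type*} [CommRing R] (N : ℕ) :
    ∑ j ∈ range (N + 1), (N.choose j : R) * (-1) ^ j = if N = 0 then 1 else 0 := by
  have := (add_pow (-1 : R) 1 N).symm
  simp only [neg_add_cancel, one_pow, mul_one, zero_pow_eq] at this
  rw [← this]
  exact sum_congr rfl fun j _ => mul_comm _ _

lemma rpow_sub_one_mul_div_add_div {q : ℝ} (hq0 : 0 < q) (a c : ℝ) (j : ℕ) :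
    q ^ (a - 1) * (c * q ^ (j + 1) / (1 + q ^ (a + j))) + c / (1 + q ^ (a + j)) = c := by
  have hweight : q ^ (a - 1) * q ^ (j + 1) = q ^ (a + j) := by
    rw [← Real.rpow_natCast, ← Real.rpow_add hq0]
    push_cast
    ring_nf
  have hden : 1 + q ^ (a + j) ≠ 0 := by positivity
  rw [← hweight] at hden ⊢
  field_simp
  ring

theorem statement3_general (q : ℝ) (hq0 : 0 < q) (hq1 : q ≠ 1) (h : ℤ) (n : ℕ) :
    q ^ ((h : ℝ) - 1) *
        (∑ k ∈ Finset.range (n + 1), (n.choose k : ℝ) * q ^ k * hqGenocchi h q k 0) +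
      hqGenocchi h q n 0 = if n = 1 then 1 + q else 0 := by
  obtain _ | N := n
  · simp [hqGenocchi]
  apply mul_left_cancel₀ (pow_ne_zero N (sub_ne_zero.mpr hq1.symm))
  rw [mul_add, mul_left_comm, one_sub_pow_mul_sum_choose_mul_hqGenocchi h hq1,
    one_sub_pow_mul_hqGenocchi_succ h hq1 le_rfl, Nat.sub_self, pow_zero, one_mul,
    mul_left_comm, ← mul_add, mul_sum, ← sum_add_distrib,
    sum_congr rfl fun j _ => rpow_sub_one_mul_div_add_div hq0 h _ j,
    sum_range_choose_mul_neg_one_pow]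
  rcases N with _ | N <;> simp

theorem statement3 (q : ℝ) (hq0 : 0 < q) (hq1 : q ≠ 1) (h : ℤ) (hh : 1 ≤ h) (n : ℕ) :
    q ^ ((h : ℝ) - 1) *
        (∑ k ∈ Finset.range (n + 1), (n.choose k : ℝ) * q ^ k * hqGenocchi h q k 0) +
      hqGenocchi h q n 0 = if n = 1 then 1 + q else 0 :=
  statement3_general q hq0 hq1 h n
end

section
/- Let q be a real number with q > 0 and q ≠ 1, let h be an integer with h ≥ 1, and let n, k be natural numbers with n > k and k > 0. Then Σ_{l=0}^{n-k} binom(n-k,l) · (-1)^l · G_{l+k+1}^{(h)}(q)/(l+k+1) = Σ_{l=0}^{k} binom(k,l) · (-1)^{k+l} · ( (1+q) + q^{h+1} · G_{n-l+1}^{(h)}(q^{-1})/(n-l+1) ). -/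
/-! With `a j = 1 / (1 + q ^ (h + j))` and `L` the linear functional on `ℝ[X]` with
`L (X ^ j) = a j`, the definition reads `G_{m+1}(q) / (m + 1) = (1 + q) L (u ^ m)` for
`u = (1 - X) / (1 - q)`. The identity `a j * (1 + q ^ h * q ^ j) = 1` says
`L p + q ^ h L (p (q X)) = p (1)`, and `1 / (1 + q⁻¹ ^ (h + j)) = 1 - a j`; together they give
`(1 + q) + q ^ (h + 1) G_{m+1}(q⁻¹) / (m + 1) = (1 + q) L (v ^ m)` for `m ≥ 1`, where
`v = (X - q) / (1 - q) = 1 - u`. By the binomial theorem both sides of the theorem are then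
`(1 + q) L (u ^ k v ^ (n - k))`. -/

open Finset Polynomial

section Binomial

variable {R A : Type*} [CommRing R] [CommRing A] [Algebra R A]

theorem sum_range_choose_smul_pow_add (x : A) (N k : ℕ) :
    ∑ l ∈ range (N + 1), ((N.choose l : R) * (-1) ^ l) • x ^ (l + k) =
      x ^ k * (1 - x) ^ N := by
  rw [sub_eq_neg_add, add_pow, mul_sum]
  refine sum_congr rfl fun l _ => ?_
  simp only [Algebra.smul_def, map_mul, map_pow, map_neg, map_one, map_natCast]
  ring

theorem sum_range_choose_smul_pow_sub (y : A) {n k : ℕ} (hkn : k ≤ n) :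
    ∑ l ∈ range (k + 1), ((k.choose l : R) * (-1) ^ (k + l)) • y ^ (n - l) =
      y ^ (n - k) * (1 - y) ^ k := by
  rw [show (1 - y) ^ k = (-1) ^ k * (-1 + y) ^ k by rw [← mul_pow]; ring, add_pow, mul_sum,
    mul_sum]
  refine sum_congr rfl fun l hl => ?_
  have hl : l ≤ k := Nat.lt_succ_iff.mp (mem_range.mp hl)
  simp only [Algebra.smul_def, map_mul, map_pow, map_neg, map_one, map_natCast]
  rw [show n - l = n - k + (k - l) by omega]
  ring

end Binomial

section Moment

variable {R : Type*} [CommSemiring R]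

noncomputable def momentFunctional (a : ℕ → R) : R[X] →ₗ[R] R :=
  lsum fun j => a j • LinearMap.id

variable (a : ℕ → R)

@[simp]
theorem momentFunctional_monomial (j : ℕ) (r : R) :
    momentFunctional a (monomial j r) = a j * r := by
  simp [momentFunctional]

@[simp]
theorem momentFunctional_X_pow (j : ℕ) : momentFunctional a (X ^ j) = a j := by
  rw [← monomial_one_right_eq_X_pow, momentFunctional_monomial, mul_one]

end Moment

theorem momentFunctional_C_mul_one_sub_X_pow {R : Type*} [CommRing R] (a : ℕ → R) (c : R)
    (m : ℕ) :
    momentFunctional a ((C c * (1 - X)) ^ m) =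
      c ^ m * ∑ j ∈ range (m + 1), (m.choose j : R) * (-1) ^ j * a j := by
  have hbinom := sum_range_choose_smul_pow_add (R := R) (X : R[X]) m 0
  rw [pow_zero, one_mul] at hbinom
  rw [mul_pow, ← C_pow, C_mul', map_smul, ← hbinom, map_sum, smul_eq_mul]
  simp only [add_zero, map_smul, momentFunctional_X_pow, smul_eq_mul]

noncomputable def genocchiWeight (h : ℤ) (q : ℝ) (j : ℕ) : ℝ :=
  (1 + q ^ ((h : ℝ) + j))⁻¹

theorem hqGenocchi_succ_div_eq (h : ℤ) (q : ℝ) (m : ℕ) :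
    hqGenocchi h q (m + 1) 0 / ((m : ℝ) + 1) =
      (1 + q) * momentFunctional (genocchiWeight h q) ((C (1 - q)⁻¹ * (1 - X)) ^ m) := by
  rw [momentFunctional_C_mul_one_sub_X_pow, hqGenocchi, if_neg m.succ_ne_zero, Nat.add_sub_cancel]
  simp only [mul_zero, Real.rpow_zero, mul_one, genocchiWeight, div_eq_mul_inv, inv_pow]
  push_cast
  field_simp

theorem genocchiWeight_inv {q : ℝ} (hq : 0 < q) (h : ℤ) (j : ℕ) :
    genocchiWeight h q⁻¹ j = 1 - genocchiWeight h q j := by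
  have : 0 < q ^ ((h : ℝ) + j) := Real.rpow_pos_of_pos hq _
  simp only [genocchiWeight, Real.inv_rpow hq.le]
  field_simp
  ring

theorem momentFunctional_genocchiWeight_inv {q : ℝ} (hq : 0 < q) (h : ℤ) (p : ℝ[X]) :
    momentFunctional (genocchiWeight h q⁻¹) p =
      p.eval 1 - momentFunctional (genocchiWeight h q) p := by
  induction p using Polynomial.induction_on' with
  | add p r hp hr => simp only [map_add, hp, hr, eval_add]; ring
  | monomial j r => simp [genocchiWeight_inv hq]; ring

theorem momentFunctional_genocchiWeight_add_comp {q : ℝ} (hq : 0 < q) (h : ℤ) (p : ℝ[X]) :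
    momentFunctional (genocchiWeight h q) p +
        q ^ (h : ℝ) * momentFunctional (genocchiWeight h q) (p.comp (C q * X)) = p.eval 1 := by
  induction p using Polynomial.induction_on' with
  | add p r hp hr => simp only [map_add, add_comp, eval_add, ← hp, ← hr]; ring
  | monomial j r =>
    have hpos : 0 < q ^ ((h : ℝ) + j) := Real.rpow_pos_of_pos hq _
    rw [monomial_comp, mul_pow, ← C_pow, ← mul_assoc, ← C_mul, C_mul_X_pow_eq_monomial,
      momentFunctional_monomial, momentFunctional_monomial, eval_monomial, one_pow, mul_one,
      genocchiWeight]
    rw [Real.rpow_add hq, Real.rpow_natCast] at hpos ⊢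
    field_simp

theorem one_add_add_hqGenocchi_inv_succ_div_eq {q : ℝ} (hq0 : 0 < q) (hq1 : q ≠ 1) (h : ℤ)
    {m : ℕ} (hm : m ≠ 0) :
    (1 + q) + q ^ ((h : ℝ) + 1) * hqGenocchi h q⁻¹ (m + 1) 0 / ((m : ℝ) + 1) =
      (1 + q) * momentFunctional (genocchiWeight h q) ((C (1 - q)⁻¹ * (X - C q)) ^ m) := by
  set v : ℝ[X] := C (1 - q)⁻¹ * (X - C q)
  have hsub : 1 - q ≠ 0 := sub_ne_zero.mpr hq1.symm
  have hv_comp : v.comp (C q * X) = C (1 - q⁻¹)⁻¹ * (1 - X) := by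
    have : (1 - q⁻¹)⁻¹ = -((1 - q)⁻¹ * q) := by
      field_simp
      ring
    simp only [v, this, mul_comp, C_comp, sub_comp, X_comp, C_neg, C_mul]
    ring
  have hv_one : v.eval 1 = 1 := by
    simp only [v, eval_mul, eval_C, eval_sub, eval_X]
    exact inv_mul_cancel₀ hsub
  have hfun := momentFunctional_genocchiWeight_add_comp hq0 h (v ^ m)
  rw [pow_comp, hv_comp, eval_pow, hv_one, one_pow] at hfun
  rw [mul_div_assoc, hqGenocchi_succ_div_eq, momentFunctional_genocchiWeight_inv hq0, eval_pow,
    eval_mul, eval_sub, eval_one, eval_X, sub_self, mul_zero, zero_pow hm, zero_sub,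
    Real.rpow_add_one hq0.ne']
  generalize momentFunctional (genocchiWeight h q) ((C (1 - q⁻¹)⁻¹ * (1 - X)) ^ m) = x at hfun ⊢
  linear_combination (-(1 + q)) * hfun - q ^ (h : ℝ) * x * mul_inv_cancel₀ hq0.ne'

theorem statement6_general (q : ℝ) (hq0 : 0 < q) (hq1 : q ≠ 1) (h : ℤ)
    (n k : ℕ) (hnk : k < n) :
    ∑ l ∈ Finset.range (n - k + 1), ((n - k).choose l : ℝ) * (-1 : ℝ) ^ l *
        hqGenocchi h q (l + k + 1) 0 / ((l : ℝ) + (k : ℝ) + 1) =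
      ∑ l ∈ Finset.range (k + 1), (k.choose l : ℝ) * (-1 : ℝ) ^ (k + l) *
        ((1 + q) + q ^ ((h : ℝ) + 1) * hqGenocchi h q⁻¹ (n - l + 1) 0 / ((n : ℝ) - (l : ℝ) + 1)) := by
  set L := momentFunctional (genocchiWeight h q)
  set u : ℝ[X] := C (1 - q)⁻¹ * (1 - X)
  set v : ℝ[X] := C (1 - q)⁻¹ * (X - C q)
  have huv : 1 - u = v := by
    have hw : C (1 - q)⁻¹ * (1 - C q) = 1 := by
      rw [← C_1, ← C_sub, ← C_mul, inv_mul_cancel₀ (sub_ne_zero.mpr hq1.symm)]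
    linear_combination -hw
  have hvu : 1 - v = u := by rw [← huv, sub_sub_cancel]
  have hlhs : ∀ l ∈ range (n - k + 1), ((n - k).choose l : ℝ) * (-1 : ℝ) ^ l *
      hqGenocchi h q (l + k + 1) 0 / ((l : ℝ) + (k : ℝ) + 1) =
        (1 + q) * L ((((n - k).choose l : ℝ) * (-1) ^ l) • u ^ (l + k)) := fun l _ => by
    rw [mul_div_assoc, show (l : ℝ) + k + 1 = ((l + k : ℕ) : ℝ) + 1 by push_cast; ring,
      hqGenocchi_succ_div_eq, map_smul, smul_eq_mul]
    ring
  have hrhs : ∀ l ∈ range (k + 1), (k.choose l : ℝ) * (-1 : ℝ) ^ (k + l) *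
      ((1 + q) + q ^ ((h : ℝ) + 1) * hqGenocchi h q⁻¹ (n - l + 1) 0 / ((n : ℝ) - l + 1)) =
        (1 + q) * L (((k.choose l : ℝ) * (-1) ^ (k + l)) • v ^ (n - l)) := fun l hl => by
    have hln : l < n := by have := mem_range.mp hl; omega
    rw [← Nat.cast_sub hln.le, one_add_add_hqGenocchi_inv_succ_div_eq hq0 hq1 h (by omega),
      map_smul, smul_eq_mul]
    ring
  rw [sum_congr rfl hlhs, sum_congr rfl hrhs, ← mul_sum, ← mul_sum, ← map_sum, ← map_sum,
    sum_range_choose_smul_pow_add, sum_range_choose_smul_pow_sub _ hnk.le, huv, hvu, mul_comm (u ^ k)]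

theorem statement6 (q : ℝ) (hq0 : 0 < q) (hq1 : q ≠ 1) (h : ℤ) (hh : 1 ≤ h)
    (n k : ℕ) (hk : 0 < k) (hnk : k < n) :
    ∑ l ∈ Finset.range (n - k + 1), ((n - k).choose l : ℝ) * (-1 : ℝ) ^ l *
        hqGenocchi h q (l + k + 1) 0 / ((l : ℝ) + (k : ℝ) + 1) =
      ∑ l ∈ Finset.range (k + 1), (k.choose l : ℝ) * (-1 : ℝ) ^ (k + l) *
        ((1 + q) + q ^ ((h : ℝ) + 1) * hqGenocchi h q⁻¹ (n - l + 1) 0 / ((n : ℝ) - (l : ℝ) + 1)) :=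
  statement6_general q hq0 hq1 h n k hnk
end

section
/- Let q be a real number with q > 0 and q ≠ 1, let h be an integer with h ≥ 1, let s be a natural number with s ≥ 2, let k be a natural number with k > 0, and let n₁, …, n_s be natural numbers with N := n₁ + ⋯ + n_s > s·k. Then Σ_{l=0}^{N-sk} binom(N-sk, l) · (-1)^l · G_{l+sk+1}^{(h)}(q)/(l+sk+1) = Σ_{l=0}^{sk} binom(sk,l) · (-1)^{sk+l} · ( (1+q) + q^{h+1} · G_{N-l+1}^{(h)}(q^{-1})/(N-l+1) ). -/
/-!
Let `L` be the linear functional on `ℝ[X]` with `L (X ^ t) = 1 / (1 + q ^ (h + t))`, and `L'`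
the same functional for `q⁻¹`. Since
`G_{p+1}^{(h)}(q) / (p + 1) = (1 + q) / (1 - q) ^ p · L ((1 - X) ^ p)`, with `m = sk` and
`M = N - sk` the left side collapses to a multiple of `L ((1 - X) ^ m (X - q) ^ M)` and the right
side to a multiple of `L' ((1 - X) ^ M (1 - q X) ^ m)`. The weights for `q` and `q⁻¹` add up to
`1`, and the one for `q⁻¹` is `q ^ (h + t)` times the one for `q`; hence `L + L'` is evaluation
at `1` and `L' P = q ^ h · L (P (q X))`. As both polynomials vanish at `1`, these two relations
turn one side into the other.
-/

open Finset

section BinomialTransform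

variable {R A : Type*} [CommRing R] [CommRing A] [Algebra R A] (L : A →ₗ[R] R) (u : R) (P Q : A)
  (n : ℕ)

theorem LinearMap.sum_choose_mul_pow_mul_map :
    ∑ l ∈ Finset.range (n + 1), (n.choose l : R) * u ^ l * L (Q * P ^ l) =
      L (Q * (u • P + 1) ^ n) := by
  rw [add_pow, mul_sum, map_sum]
  refine sum_congr rfl fun l _ => ?_
  have : Q * ((u • P) ^ l * 1 ^ (n - l) * n.choose l) =
      ((n.choose l : R) * u ^ l) • (Q * P ^ l) := by
    rw [smul_pow, one_pow, mul_one]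
    simp only [Algebra.smul_def, map_pow, map_mul, map_natCast]
    ring
  rw [this, map_smul, smul_eq_mul]

theorem LinearMap.sum_choose_mul_pow_sub_mul_map :
    ∑ l ∈ Finset.range (n + 1), (n.choose l : R) * u ^ (n - l) * L (Q * P ^ (n - l)) =
      L (Q * (u • P + 1) ^ n) := by
  rw [← LinearMap.sum_choose_mul_pow_mul_map, ← sum_range_reflect]
  refine sum_congr rfl fun l hl => ?_
  have hln := mem_range_succ_iff.mp hl
  rw [Nat.add_sub_cancel, Nat.choose_symm hln, Nat.sub_sub_self hln]

end BinomialTransform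

namespace Polynomial

variable {R : Type*} [CommRing R]

noncomputable def moment (c : ℕ → R) : R[X] →ₗ[R] R := lsum fun t => c t • LinearMap.id

theorem moment_monomial (c : ℕ → R) (t : ℕ) (a : R) : moment c (monomial t a) = c t * a := by
  simp [moment]

theorem moment_add_moment_eq_eval {c d : ℕ → R} (hcd : ∀ t, c t + d t = 1) (P : R[X]) :
    moment c P + moment d P = P.eval 1 := by
  induction P using Polynomial.induction_on' with
  | add P Q hP hQ => rw [map_add, map_add, eval_add, ← hP, ← hQ]; ring
  | monomial t a => rw [moment_monomial, moment_monomial, ← add_mul, hcd]; simp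

theorem moment_eq_mul_moment_comp {c d : ℕ → R} {a b : R} (hdc : ∀ t, d t = a * b ^ t * c t)
    (P : R[X]) : moment d P = a * moment c (P.comp (C b * X)) := by
  induction P using Polynomial.induction_on' with
  | add P Q hP hQ => rw [map_add, hP, hQ, add_comp, map_add, mul_add]
  | monomial t e =>
    rw [monomial_comp, mul_pow, ← C_pow, ← mul_assoc, ← C_mul, C_mul_X_pow_eq_monomial,
      moment_monomial, moment_monomial, hdc]
    ring

theorem moment_one_sub_X_pow (c : ℕ → R) (p : ℕ) :
    moment c ((1 - X) ^ p) = ∑ t ∈ range (p + 1), (p.choose t : R) * (-1) ^ t * c t := by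
  rw [sub_eq_neg_add, add_pow, map_sum]
  refine sum_congr rfl fun t _ => ?_
  rw [neg_pow, one_pow, mul_one, ← C_eq_natCast, ← C_1, ← C_neg, ← C_pow, mul_comm, ← mul_assoc,
    ← C_mul, C_mul_X_pow_eq_monomial, moment_monomial]
  ring

end Polynomial

open Polynomial

noncomputable def hqWeight (h : ℤ) (q : ℝ) (t : ℕ) : ℝ := (1 + q ^ ((h : ℝ) + t))⁻¹

theorem hqWeight_inv (h : ℤ) {q : ℝ} (hq : 0 < q) (t : ℕ) :
    hqWeight h q⁻¹ t = q ^ (h : ℝ) * q ^ t * hqWeight h q t := by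
  have hpos : 0 < q ^ ((h : ℝ) + t) := Real.rpow_pos_of_pos hq _
  rw [hqWeight, hqWeight, Real.inv_rpow hq.le, ← Real.rpow_natCast, ← Real.rpow_add hq]
  field_simp
  ring

theorem hqWeight_add_hqWeight_inv (h : ℤ) {q : ℝ} (hq : 0 < q) (t : ℕ) :
    hqWeight h q t + hqWeight h q⁻¹ t = 1 := by
  have hpos : 0 < q ^ ((h : ℝ) + t) := Real.rpow_pos_of_pos hq _
  rw [hqWeight_inv h hq, hqWeight, ← Real.rpow_natCast, ← Real.rpow_add hq]
  field_simp

theorem hqGenocchi_succ_zero_div (h : ℤ) (q : ℝ) (p : ℕ) :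
    hqGenocchi h q (p + 1) 0 / (p + 1) =
      (1 + q) / (1 - q) ^ p * moment (hqWeight h q) ((1 - X) ^ p) := by
  rw [hqGenocchi, if_neg p.succ_ne_zero, moment_one_sub_X_pow, Nat.add_sub_cancel]
  simp only [mul_zero, Real.rpow_zero, hqWeight]
  push_cast
  field_simp

theorem sum_choose_hqGenocchi (h : ℤ) {q : ℝ} (hq1 : q ≠ 1) (M m : ℕ) :
    ∑ l ∈ range (M + 1), (M.choose l : ℝ) * (-1) ^ l * hqGenocchi h q (l + m + 1) 0 /
        ((l : ℝ) + m + 1) =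
      (1 + q) * (1 - q)⁻¹ ^ (M + m) * moment (hqWeight h q) ((1 - X) ^ m * (X - C q) ^ M) := by
  set r := (1 - q)⁻¹
  have hlin : (-r) • (1 - X) + 1 = r • (X - C q) := by
    have hr1 : C r * (1 - C q) = 1 := by
      rw [← C_1, ← C_sub, ← C_mul, inv_mul_cancel₀ (sub_ne_zero.mpr hq1.symm)]
    simp only [smul_eq_C_mul, C_neg]
    linear_combination -hr1
  calc _ = (1 + q) * r ^ m * ∑ l ∈ range (M + 1),
        (M.choose l : ℝ) * (-r) ^ l * moment (hqWeight h q) ((1 - X) ^ m * (1 - X) ^ l) := by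
        rw [mul_sum]
        refine sum_congr rfl fun l _ => ?_
        rw [mul_div_assoc, show ((l : ℝ) + m + 1) = ((l + m : ℕ) : ℝ) + 1 by push_cast; ring,
          hqGenocchi_succ_zero_div, div_eq_mul_inv, ← inv_pow, pow_add, pow_add, neg_pow,
          mul_comm ((1 - X) ^ l)]
        ring
    _ = _ := by
        rw [LinearMap.sum_choose_mul_pow_mul_map, hlin, _root_.smul_pow, mul_smul_comm, map_smul,
          smul_eq_mul, pow_add]
        ring

theorem sum_choose_hqGenocchi_inv (h : ℤ) {q : ℝ} (hq0 : 0 < q) (hq1 : q ≠ 1) (M m : ℕ) :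
    ∑ l ∈ range (m + 1), (m.choose l : ℝ) * (-1) ^ (m + l) *
        (q ^ ((h : ℝ) + 1) * hqGenocchi h q⁻¹ (M + m - l + 1) 0 / (((M + m : ℕ) : ℝ) - l + 1)) =
      q ^ (h : ℝ) * (1 + q) * (-q) ^ M * (1 - q)⁻¹ ^ (M + m) *
        moment (hqWeight h q⁻¹) ((1 - X) ^ M * (1 - C q * X) ^ m) := by
  set L' := moment (hqWeight h q⁻¹)
  set r := (1 - q)⁻¹ with hr
  have hr1 : r * (1 - q) = 1 := inv_mul_cancel₀ (sub_ne_zero.mpr hq1.symm)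
  have hinv : (1 - q⁻¹)⁻¹ = -(q * r) := by
    rw [hr]
    field_simp
    ring
  have hqh : q ^ ((h : ℝ) + 1) * (1 + q⁻¹) = q ^ (h : ℝ) * (1 + q) := by
    rw [Real.rpow_add_one hq0.ne']
    field_simp
    ring
  have hlin : (q * r) • (1 - X) + 1 = r • (1 - C q * X) := by
    have hC : C r * (1 - C q) = 1 := by rw [← C_1, ← C_sub, ← C_mul, hr1]
    simp only [smul_eq_C_mul, C_mul]
    linear_combination -hC
  calc _ = q ^ (h : ℝ) * (1 + q) * (-(q * r)) ^ M * ∑ l ∈ range (m + 1),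
        (m.choose l : ℝ) * (q * r) ^ (m - l) * L' ((1 - X) ^ M * (1 - X) ^ (m - l)) := by
        rw [mul_sum]
        refine sum_congr rfl fun l hl => ?_
        have hlm := mem_range_succ_iff.mp hl
        have hsign : (-1 : ℝ) ^ (m + l) * (1 - q⁻¹)⁻¹ ^ (M + (m - l)) =
            (-(q * r)) ^ M * (q * r) ^ (m - l) := by
          rw [← Nat.sub_add_cancel hlm, add_assoc, pow_add, ← two_mul, pow_mul, neg_one_sq,
            one_pow, mul_one, Nat.add_sub_cancel, hinv, pow_add, mul_left_comm, ← mul_pow,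
            neg_one_mul, neg_neg]
        rw [mul_div_assoc, show M + m - l = M + (m - l) by omega,
          show ((M + m : ℕ) : ℝ) - l + 1 = ((M + (m - l) : ℕ) : ℝ) + 1 by push_cast [hlm]; ring,
          hqGenocchi_succ_zero_div, div_eq_mul_inv, ← inv_pow, pow_add (1 - X)]
        trans (m.choose l : ℝ) * (q ^ ((h : ℝ) + 1) * (1 + q⁻¹)) *
          ((-1) ^ (m + l) * (1 - q⁻¹)⁻¹ ^ (M + (m - l))) * L' ((1 - X) ^ M * (1 - X) ^ (m - l))
        · ring
        rw [hsign, hqh]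
        ring
    _ = _ := by
        rw [LinearMap.sum_choose_mul_pow_sub_mul_map, hlin, _root_.smul_pow, mul_smul_comm,
          map_smul, smul_eq_mul, pow_add, neg_pow (q * r)]
        ring

theorem sum_choose_hqGenocchi_eq_sum_choose_hqGenocchi_inv (h : ℤ) {q : ℝ} (hq0 : 0 < q)
    (hq1 : q ≠ 1) {M m : ℕ} (hM : M ≠ 0) (hm : m ≠ 0) :
    ∑ l ∈ range (M + 1), (M.choose l : ℝ) * (-1) ^ l * hqGenocchi h q (l + m + 1) 0 /
        ((l : ℝ) + m + 1) =
      ∑ l ∈ range (m + 1), (m.choose l : ℝ) * (-1) ^ (m + l) *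
        (q ^ ((h : ℝ) + 1) * hqGenocchi h q⁻¹ (M + m - l + 1) 0 / (((M + m : ℕ) : ℝ) - l + 1)) := by
  set L := moment (hqWeight h q)
  set L' := moment (hqWeight h q⁻¹)
  set Q : ℝ[X] := (1 - X) ^ m * (X - C q) ^ M
  set R : ℝ[X] := (1 - X) ^ M * (1 - C q * X) ^ m
  have hL' (P : ℝ[X]) : L' P = q ^ (h : ℝ) * L (P.comp (C q * X)) :=
    moment_eq_mul_moment_comp (hqWeight_inv h hq0) P
  have hLL' (P : ℝ[X]) : L P + L' P = P.eval 1 :=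
    moment_add_moment_eq_eval (hqWeight_add_hqWeight_inv h hq0) P
  have hQ : Q.comp (C q * X) = (-q) ^ M • R := by
    simp only [Q, R, mul_comp, pow_comp, sub_comp, one_comp, X_comp, C_comp]
    rw [show C q * X - C q = -C q * (1 - X) by ring, mul_pow, smul_eq_C_mul, C_pow, C_neg]
    ring
  have hLQ : L Q = -(q ^ (h : ℝ) * (-q) ^ M * L R) := by
    have := hLL' Q
    rw [hL', hQ, map_smul, smul_eq_mul] at this
    simp only [Q, eval_mul, eval_pow, eval_sub, eval_one, eval_X, sub_self, zero_pow hm,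
      zero_mul] at this
    linear_combination this
  have hL'R : L' R = -L R := by
    have := hLL' R
    simp only [R, eval_mul, eval_pow, eval_sub, eval_one, eval_X, sub_self, zero_pow hM,
      zero_mul] at this
    linear_combination this
  rw [sum_choose_hqGenocchi h hq1, sum_choose_hqGenocchi_inv h hq0 hq1, hLQ, hL'R]
  ring

theorem statement9_general (q : ℝ) (hq0 : 0 < q) (hq1 : q ≠ 1) (h : ℤ)
    (s : ℕ) (hs : 2 ≤ s) (k : ℕ) (hk : 0 < k)
    (N : ℕ) (hNk : s * k < N) :
    ∑ l ∈ Finset.range (N - s * k + 1), ((N - s * k).choose l : ℝ) * (-1 : ℝ) ^ l *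
        hqGenocchi h q (l + s * k + 1) 0 / ((l : ℝ) + (s : ℝ) * (k : ℝ) + 1) =
      ∑ l ∈ Finset.range (s * k + 1), ((s * k).choose l : ℝ) * (-1 : ℝ) ^ (s * k + l) *
        ((1 + q) + q ^ ((h : ℝ) + 1) * hqGenocchi h q⁻¹ (N - l + 1) 0 / ((N : ℝ) - (l : ℝ) + 1)) := by
  obtain ⟨M, rfl⟩ : ∃ M, N = M + s * k := ⟨N - s * k, by omega⟩
  have hm : s * k ≠ 0 := Nat.mul_ne_zero (by omega) hk.ne'
  have hM : M ≠ 0 := by omega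
  have halt :
      ∑ l ∈ range (s * k + 1), ((s * k).choose l : ℝ) * (-1) ^ (s * k + l) * (1 + q) = 0 := by
    have hint : ∑ l ∈ range (s * k + 1), ((-1) ^ l * (s * k).choose l : ℝ) = 0 := by
      exact_mod_cast Int.alternating_sum_range_choose_of_ne hm
    rw [← mul_zero ((-1) ^ (s * k) * (1 + q)), ← hint, mul_sum]
    exact sum_congr rfl fun l _ => by ring
  simp only [mul_add _ (1 + q), sum_add_distrib, halt, zero_add, Nat.add_sub_cancel]
  exact_mod_cast sum_choose_hqGenocchi_eq_sum_choose_hqGenocchi_inv h hq0 hq1 hM hm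

theorem statement9 (q : ℝ) (hq0 : 0 < q) (hq1 : q ≠ 1) (h : ℤ) (hh : 1 ≤ h)
    (s : ℕ) (hs : 2 ≤ s) (k : ℕ) (hk : 0 < k) (n : Fin s → ℕ)
    (N : ℕ) (hN : N = ∑ i, n i) (hNk : s * k < N) :
    ∑ l ∈ Finset.range (N - s * k + 1), ((N - s * k).choose l : ℝ) * (-1 : ℝ) ^ l *
        hqGenocchi h q (l + s * k + 1) 0 / ((l : ℝ) + (s : ℝ) * (k : ℝ) + 1) =
      ∑ l ∈ Finset.range (s * k + 1), ((s * k).choose l : ℝ) * (-1 : ℝ) ^ (s * k + l) *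
        ((1 + q) + q ^ ((h : ℝ) + 1) * hqGenocchi h q⁻¹ (N - l + 1) 0 / ((N : ℝ) - (l : ℝ) + 1)) :=
  statement9_general q hq0 hq1 h s hs k hk N hNk
end

section
/- Let q be a real number with 0 < q < 1, let h be an integer with h ≥ 1, let x be a real number with x > 0, let s be a complex number, and let a, b be odd positive integers. Then ([2]_{q^b} / [a]_q^s) · Σ_{i=0}^{a-1} (-1)^i · q^{ibh} · ζ_{q^a}^{(h)}(s, bx + bi/a) = ([2]_{q^a} / [b]_q^s) · Σ_{i=0}^{b-1} (-1)^i · q^{iah} · ζ_{q^b}^{(h)}(s, ax + ai/b). -/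
/-- The (h,q)-zeta function `ζ_q^{(h)}(s,x) = (1+q) ∑_{m=0}^∞ (-1)^m q^{mh} [m+x]_q^{-s}`,
where the power with complex exponent is a complex power of the positive real base. -/
noncomputable def hqZeta (h : ℤ) (q : ℝ) (s : ℂ) (x : ℝ) : ℂ :=
  (1 + (q : ℂ)) * ∑' m : ℕ, (-1 : ℂ) ^ m * ((q ^ ((m : ℝ) * (h : ℝ)) : ℝ) : ℂ) *
    ((qnum q ((m : ℝ) + x) : ℝ) : ℂ) ^ (-s)

/-! Rescaling `q ↦ q^a` gives `[m + bx + bi/a]_{q^a} = [abx + (am + bi)]_q / [a]_q`, and as `a`, `b`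
are odd, the sign `(-1)^{i+m}` and the power `q^{(ibh) + a m h}` also depend only on `n = am + bi`.
Hence the left side is `(1+q^a)(1+q^b) ∑_{i<a} ∑_m F(am + bi)` with
`F(n) = (-1)^n q^{nh} [abx + n]_q^{-s}`, and splitting `m` by its residue `j` modulo `b` turns this
double sum into `∑_{i<a} ∑_{j<b} ∑_k F(abk + aj + bi)`, which is symmetric in `a` and `b`. -/

open Filter Topology

lemma qnum_nonneg {q t : ℝ} (hq0 : 0 ≤ q) (hq1 : q < 1) (ht : 0 ≤ t) : 0 ≤ qnum q t :=
  div_nonneg (sub_nonneg.2 (Real.rpow_le_one hq0 hq1.le ht)) (sub_nonneg.2 hq1.le)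

lemma qnum_pos {q t : ℝ} (hq0 : 0 ≤ q) (hq1 : q < 1) (ht : 0 < t) : 0 < qnum q t :=
  div_pos (sub_pos.2 (Real.rpow_lt_one hq0 hq1 ht)) (sub_pos.2 hq1)

lemma qnum_pow {q : ℝ} (hq0 : 0 ≤ q) (hq1 : q ≠ 1) {n : ℕ} (hn : n ≠ 0) (t : ℝ) :
    qnum (q ^ n) t = qnum q (n * t) / qnum q n := by
  have hq : 1 - q ≠ 0 := sub_ne_zero.2 hq1.symm
  have hqn : 1 - q ^ n ≠ 0 := sub_ne_zero.2 (Ne.symm ((pow_eq_one_iff_of_nonneg hq0 hn).not.2 hq1))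
  simp only [qnum, Real.rpow_natCast, ← Real.rpow_natCast_mul hq0]
  field_simp

lemma tendsto_qnum_natCast_add {q : ℝ} (hq0 : 0 < q) (hq1 : q < 1) (x : ℝ) :
    Tendsto (fun m : ℕ => qnum q (m + x)) atTop (𝓝 (1 / (1 - q))) := by
  have hpow : Tendsto (fun m : ℕ => q ^ ((m : ℝ) + x)) atTop (𝓝 0) := by
    simp_rw [Real.rpow_add hq0, Real.rpow_natCast]
    simpa using (tendsto_pow_atTop_nhds_zero_of_lt_one hq0.le hq1).mul_const (q ^ x)
  simpa [qnum] using ((tendsto_const_nhds (x := (1 : ℝ))).sub hpow).div_const (1 - q)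

noncomputable def hqZetaTerm (h : ℤ) (q : ℝ) (s : ℂ) (x : ℝ) (m : ℕ) : ℂ :=
  (-1 : ℂ) ^ m * ((q ^ ((m : ℝ) * (h : ℝ)) : ℝ) : ℂ) * ((qnum q ((m : ℝ) + x) : ℝ) : ℂ) ^ (-s)

lemma hqZeta_eq (h : ℤ) (q : ℝ) (s : ℂ) (x : ℝ) :
    hqZeta h q s x = (1 + (q : ℂ)) * ∑' m, hqZetaTerm h q s x m := rfl

lemma summable_hqZetaTerm {q : ℝ} (hq0 : 0 < q) (hq1 : q < 1) {h : ℤ} (hh : 0 < h) (s : ℂ)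
    (x : ℝ) : Summable (hqZetaTerm h q s x) := by
  set r := q ^ (h : ℝ)
  have hr1 : r < 1 := Real.rpow_lt_one hq0.le hq1 (by exact_mod_cast hh)
  have hlim : ((1 / (1 - q) : ℝ) : ℂ) ∈ Complex.slitPlane :=
    Complex.ofReal_mem_slitPlane.2 (one_div_pos.2 (sub_pos.2 hq1))
  have hbdd : (fun m : ℕ => ((qnum q ((m : ℝ) + x) : ℝ) : ℂ) ^ (-s)) =O[atTop] (fun _ => (1 : ℝ)) :=
    (((Complex.continuous_ofReal.tendsto _).comp (tendsto_qnum_natCast_add hq0 hq1 x)).cpow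
      tendsto_const_nhds hlim).isBigO_one ℝ
  have hgeom : (fun m : ℕ => (-1 : ℂ) ^ m * ((q ^ ((m : ℝ) * (h : ℝ)) : ℝ) : ℂ)) =O[atTop]
      (fun m => r ^ m) := by
    refine Asymptotics.isBigO_of_le _ fun m => ?_
    rw [norm_mul, norm_pow, norm_neg, norm_one, one_pow, one_mul, Complex.norm_real,
      mul_comm, Real.rpow_mul hq0.le, Real.rpow_natCast]
  refine summable_of_isBigO_nat (summable_geometric_of_lt_one (by positivity) hr1) ?_
  have hprod := hgeom.mul hbdd
  simp only [mul_one] at hprod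
  exact hprod

lemma tsum_eq_sum_range_tsum_mul_add {E : Type*} [NormedAddCommGroup E] [CompleteSpace E]
    {g : ℕ → E} (hg : Summable g) (b : ℕ) [NeZero b] :
    ∑' m, g m = ∑ j ∈ Finset.range b, ∑' k, g (b * k + j) := by
  let e : ℕ ≃ Fin b × ℕ := (Nat.divModEquiv b).trans (Equiv.prodComm _ _)
  have he : ∀ p : Fin b × ℕ, e.symm p = b * p.2 + p.1 := fun p => by
    simp [e, mul_comm]
  have hg' : Summable fun p : Fin b × ℕ => g (b * p.2 + p.1) := by
    simpa only [Function.comp_def, he] using e.symm.summable_iff.2 hg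
  rw [← e.symm.tsum_eq]
  simp only [he]
  rw [hg'.tsum_prod' hg'.prod_factor, tsum_fintype, Fin.sum_univ_eq_sum_range (fun j => ∑' k, g (b * k + j))]

lemma sum_range_tsum_mul_add_mul_comm {E : Type*} [NormedAddCommGroup E] [CompleteSpace E]
    {f : ℕ → E} (hf : Summable f) (a b : ℕ) [NeZero a] [NeZero b] :
    ∑ i ∈ Finset.range a, ∑' m, f (a * m + b * i) =
      ∑ j ∈ Finset.range b, ∑' m, f (b * m + a * j) := by
  have split : ∀ (c d : ℕ) [NeZero c] [NeZero d], ∑ i ∈ Finset.range c, ∑' m, f (c * m + d * i) =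
      ∑ i ∈ Finset.range c, ∑ j ∈ Finset.range d, ∑' k, f (c * d * k + (c * j + d * i)) := by
    intro c d _ _
    refine Finset.sum_congr rfl fun i _ => ?_
    have hslice : Summable fun m => f (c * m + d * i) :=
      hf.comp_injective ((add_left_injective _).comp (mul_right_injective₀ (NeZero.ne c)))
    rw [tsum_eq_sum_range_tsum_mul_add hslice d]
    exact Finset.sum_congr rfl fun j _ => tsum_congr fun k => congrArg f (by ring)
  rw [split a b, split b a, Finset.sum_comm]
  exact Finset.sum_congr rfl fun j _ => Finset.sum_congr rfl fun i _ =>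
    tsum_congr fun k => congrArg f (by ring)

lemma neg_one_pow_mul_hqZetaTerm_pow {q : ℝ} (hq0 : 0 < q) (hq1 : q < 1) (h : ℤ) (s : ℂ)
    {x : ℝ} (hx : 0 ≤ x) {a b : ℕ} (hao : Odd a) (hbo : Odd b) (i m : ℕ) :
    (-1 : ℂ) ^ i * ((q ^ ((i : ℝ) * b * h) : ℝ) : ℂ) *
        hqZetaTerm h (q ^ a) s (b * x + b * i / a) m =
      ((qnum q a : ℝ) : ℂ) ^ s * hqZetaTerm h q s (a * b * x) (a * m + b * i) := by
  have ha : (a : ℝ) ≠ 0 := by exact_mod_cast hao.pos.ne'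
  have hsign : (-1 : ℂ) ^ i * (-1 : ℂ) ^ m = (-1 : ℂ) ^ (a * m + b * i) := by
    rw [pow_add, pow_mul, pow_mul, hao.neg_one_pow, hbo.neg_one_pow, mul_comm]
  have hpow : q ^ ((i : ℝ) * b * h) * (q ^ a) ^ ((m : ℝ) * h) =
      q ^ (((a * m + b * i : ℕ) : ℝ) * h) := by
    rw [← Real.rpow_natCast q a, ← Real.rpow_mul hq0.le, ← Real.rpow_add hq0]
    push_cast
    ring_nf
  have hnum : qnum (q ^ a) (m + (b * x + b * i / a)) =
      qnum q (((a * m + b * i : ℕ) : ℝ) + a * b * x) / qnum q a := by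
    rw [qnum_pow hq0.le hq1.ne hao.pos.ne']
    congr 2
    push_cast
    field_simp
    ring
  have hu : 0 ≤ qnum q (((a * m + b * i : ℕ) : ℝ) + a * b * x) :=
    qnum_nonneg hq0.le hq1 (by positivity)
  have hv : 0 ≤ qnum q a := qnum_nonneg hq0.le hq1 (Nat.cast_nonneg a)
  simp only [hqZetaTerm]
  rw [hnum, Complex.ofReal_div, Complex.div_cpow_ofReal_nonneg hu hv, Complex.cpow_neg ((qnum q a : ℝ) : ℂ) s,
    div_inv_eq_mul, ← hsign, ← hpow]
  push_cast
  ring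

lemma sum_range_hqZeta_pow_eq {q : ℝ} (hq0 : 0 < q) (hq1 : q < 1) (h : ℤ) (s : ℂ)
    {x : ℝ} (hx : 0 ≤ x) {a b : ℕ} (hao : Odd a) (hbo : Odd b) :
    ∑ i ∈ Finset.range a, (-1 : ℂ) ^ i * ((q ^ ((i : ℝ) * b * h) : ℝ) : ℂ) *
        hqZeta h (q ^ a) s (b * x + b * i / a) =
      (1 + ((q ^ a : ℝ) : ℂ)) * ((qnum q a : ℝ) : ℂ) ^ s *
        ∑ i ∈ Finset.range a, ∑' m, hqZetaTerm h q s (a * b * x) (a * m + b * i) := by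
  rw [Finset.mul_sum]
  refine Finset.sum_congr rfl fun i _ => ?_
  calc (-1 : ℂ) ^ i * ((q ^ ((i : ℝ) * b * h) : ℝ) : ℂ) * hqZeta h (q ^ a) s (b * x + b * i / a)
      = (1 + ((q ^ a : ℝ) : ℂ)) * ∑' m, (-1 : ℂ) ^ i * ((q ^ ((i : ℝ) * b * h) : ℝ) : ℂ) *
          hqZetaTerm h (q ^ a) s (b * x + b * i / a) m := by
        rw [hqZeta_eq, tsum_mul_left]
        ring
    _ = (1 + ((q ^ a : ℝ) : ℂ)) * ∑' m, ((qnum q a : ℝ) : ℂ) ^ s *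
          hqZetaTerm h q s (a * b * x) (a * m + b * i) := by
        simp only [neg_one_pow_mul_hqZetaTerm_pow hq0 hq1 h s hx hao hbo]
    _ = _ := by
        rw [tsum_mul_left]
        ring

theorem statement10_general (q : ℝ) (hq0 : 0 < q) (hq1 : q < 1) (h : ℤ) (hh : 1 ≤ h)
    (x : ℝ) (hx : 0 < x) (s : ℂ) (a b : ℕ)
    (hao : Odd a) (hbo : Odd b) :
    ((1 + q ^ b : ℝ) : ℂ) / ((qnum q a : ℝ) : ℂ) ^ s *
        ∑ i ∈ Finset.range a, (-1 : ℂ) ^ i * ((q ^ ((i : ℝ) * (b : ℝ) * (h : ℝ)) : ℝ) : ℂ) *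
          hqZeta h (q ^ a) s ((b : ℝ) * x + (b : ℝ) * (i : ℝ) / (a : ℝ)) =
      ((1 + q ^ a : ℝ) : ℂ) / ((qnum q b : ℝ) : ℂ) ^ s *
        ∑ i ∈ Finset.range b, (-1 : ℂ) ^ i * ((q ^ ((i : ℝ) * (a : ℝ) * (h : ℝ)) : ℝ) : ℂ) *
          hqZeta h (q ^ b) s ((a : ℝ) * x + (a : ℝ) * (i : ℝ) / (b : ℝ)) := by
  have : NeZero a := ⟨hao.pos.ne'⟩
  have : NeZero b := ⟨hbo.pos.ne'⟩
  have hcpow : ∀ {n : ℕ}, Odd n → ((qnum q n : ℝ) : ℂ) ^ s ≠ 0 := fun hn =>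
    Complex.cpow_ne_zero_iff.2 <| Or.inl <|
      Complex.ofReal_ne_zero.2 (qnum_pos hq0.le hq1 (Nat.cast_pos.2 hn.pos)).ne'
  have := hcpow hao
  have := hcpow hbo
  rw [sum_range_hqZeta_pow_eq hq0 hq1 h s hx.le hao hbo,
    sum_range_hqZeta_pow_eq hq0 hq1 h s hx.le hbo hao, mul_comm (b : ℝ) a,
    sum_range_tsum_mul_add_mul_comm (summable_hqZetaTerm hq0 hq1 (by omega) s _) a b]
  field_simp
  push_cast
  ring

theorem statement10 (q : ℝ) (hq0 : 0 < q) (hq1 : q < 1) (h : ℤ) (hh : 1 ≤ h)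
    (x : ℝ) (hx : 0 < x) (s : ℂ) (a b : ℕ) (ha : 0 < a) (hb : 0 < b)
    (hao : Odd a) (hbo : Odd b) :
    ((1 + q ^ b : ℝ) : ℂ) / ((qnum q a : ℝ) : ℂ) ^ s *
        ∑ i ∈ Finset.range a, (-1 : ℂ) ^ i * ((q ^ ((i : ℝ) * (b : ℝ) * (h : ℝ)) : ℝ) : ℂ) *
          hqZeta h (q ^ a) s ((b : ℝ) * x + (b : ℝ) * (i : ℝ) / (a : ℝ)) =
      ((1 + q ^ a : ℝ) : ℂ) / ((qnum q b : ℝ) : ℂ) ^ s *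
        ∑ i ∈ Finset.range b, (-1 : ℂ) ^ i * ((q ^ ((i : ℝ) * (a : ℝ) * (h : ℝ)) : ℝ) : ℂ) *
          hqZeta h (q ^ b) s ((a : ℝ) * x + (a : ℝ) * (i : ℝ) / (b : ℝ)) :=
  statement10_general q hq0 hq1 h hh x hx s a b hao hbo
end

section
/- Let q be a real number with 0 < q < 1, let h be an integer with h ≥ 1, let x be a real number with x > 0, let m be a natural number with m ≥ 1, and let a, b be odd positive integers. Then [2]_{q^b} · [a]_q^{m-1} · Σ_{i=0}^{a-1} (-1)^i · q^{ibh} · G_m^{(h)}(bx + bi/a | q^a) = [2]_{q^a} · [b]_q^{m-1} · Σ_{i=0}^{b-1} (-1)^i · q^{iah} · G_m^{(h)}(ax + ai/b | q^b). -/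
/-!
Both sides equal one expression symmetric in `a` and `b`. Expanding `G_m^{(h)}(· | q^a)` and
exchanging the two sums, the sum over `i` becomes the alternating geometric sum
`∑_{i<a} (-q^{b(h+k)})^i`, which for odd `a` equals `(1 + q^{ab(h+k)}) / (1 + q^{b(h+k)})`;
the prefactor `[a]_q^{m-1}` cancels `(1 - q^a)^{m-1}` down to `(1 - q)^{m-1}`.
-/

open Finset

lemma geom_sum_neg_of_odd {K : Type*} [Field K] {t : K} (ht : 1 + t ≠ 0) {n : ℕ} (hn : Odd n) :
    ∑ i ∈ range n, (-t) ^ i = (1 + t ^ n) / (1 + t) := by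
  have hne : -t ≠ 1 := fun h ↦ ht (by rw [← h]; ring)
  rw [geom_sum_eq hne, hn.neg_pow, ← neg_div_neg_eq]
  congr 1 <;> ring

lemma qnum_natCast (q : ℝ) (n : ℕ) : qnum q n = (1 - q ^ n) / (1 - q) := by
  rw [qnum, Real.rpow_natCast]

lemma hqGenocchi_eq (h : ℤ) (q : ℝ) (m : ℕ) (x : ℝ) :
    hqGenocchi h q m x = m * (1 + q) / (1 - q) ^ (m - 1) *
      ∑ k ∈ range m, ((m - 1).choose k : ℝ) * (-1) ^ k * q ^ ((k : ℝ) * x) /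
        (1 + q ^ ((h : ℝ) + k)) := by
  unfold hqGenocchi
  split_ifs with hm <;> simp [hm]

lemma sum_alternating_hqGenocchi_pow {q : ℝ} (hq : 0 < q) (h : ℤ) (m : ℕ) {a : ℕ} (ha : a ≠ 0)
    (b x : ℝ) :
    ∑ i ∈ range a, (-1 : ℝ) ^ i * q ^ ((i : ℝ) * b * h) *
        hqGenocchi h (q ^ a) m (b * x + b * i / a) =
      m * (1 + q ^ a) / (1 - q ^ a) ^ (m - 1) *
        ∑ k ∈ range m, ((m - 1).choose k : ℝ) * (-1) ^ k * q ^ (a * b * k * x) /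
          (1 + q ^ (a * ((h : ℝ) + k))) * ∑ i ∈ range a, (-q ^ (b * ((h : ℝ) + k))) ^ i := by
  have hpow (y : ℝ) : (q ^ a) ^ y = q ^ ((a : ℝ) * y) := by
    rw [← Real.rpow_natCast, ← Real.rpow_mul hq.le]
  have hexp (i k : ℕ) : q ^ ((a : ℝ) * (k * (b * x + b * i / a))) * q ^ ((i : ℝ) * b * h) =
      q ^ ((a : ℝ) * b * k * x) * (q ^ (b * (h + k))) ^ i := by
    rw [← Real.rpow_natCast, ← Real.rpow_mul hq.le, ← Real.rpow_add hq, ← Real.rpow_add hq]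
    congr 1
    field_simp
    ring
  simp_rw [hqGenocchi_eq, mul_sum]
  rw [sum_comm]
  refine sum_congr rfl fun k _ ↦ sum_congr rfl fun i _ ↦ ?_
  rw [hpow, hpow, neg_pow (q ^ _)]
  linear_combination m * (1 + q ^ a) / (1 - q ^ a) ^ (m - 1) * ((m - 1).choose k : ℝ) * (-1) ^ k *
    (-1) ^ i / (1 + q ^ ((a : ℝ) * (h + k))) * hexp i k

lemma qnum_pow_mul_sum_alternating_hqGenocchi {q : ℝ} (hq0 : 0 < q) (hq1 : q < 1) (h : ℤ)
    (m : ℕ) {a : ℕ} (ha : Odd a) (b : ℕ) (x : ℝ) :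
    (1 + q ^ b) * qnum q a ^ (m - 1) *
        ∑ i ∈ range a, (-1 : ℝ) ^ i * q ^ ((i : ℝ) * b * h) *
          hqGenocchi h (q ^ a) m (b * x + b * i / a) =
      m * (1 + q ^ a) * (1 + q ^ b) / (1 - q) ^ (m - 1) *
        ∑ k ∈ range m, ((m - 1).choose k : ℝ) * (-1) ^ k * q ^ ((a : ℝ) * b * k * x) *
          (1 + q ^ ((a : ℝ) * b * (h + k))) /
          ((1 + q ^ ((a : ℝ) * (h + k))) * (1 + q ^ ((b : ℝ) * (h + k)))) := by
  have h1q : 1 - q ≠ 0 := by linarith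
  have h1qa : 1 - q ^ a ≠ 0 := sub_ne_zero.mpr (pow_lt_one₀ hq0.le hq1 ha.pos.ne').ne'
  have hgeom (k : ℕ) : ∑ i ∈ range a, (-q ^ ((b : ℝ) * (h + k))) ^ i =
      (1 + q ^ ((a : ℝ) * b * (h + k))) / (1 + q ^ ((b : ℝ) * (h + k))) := by
    rw [geom_sum_neg_of_odd (by positivity) ha, ← Real.rpow_natCast, ← Real.rpow_mul hq0.le]
    ring_nf
  rw [sum_alternating_hqGenocchi_pow hq0 h m ha.pos.ne', qnum_natCast]
  simp_rw [hgeom, div_mul_div_comm, ← mul_assoc]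
  congr 1
  rw [div_pow]
  field_simp

theorem statement13_general (q : ℝ) (hq0 : 0 < q) (hq1 : q < 1) (h : ℤ) (x : ℝ) (m : ℕ) (a b : ℕ)
    (hao : Odd a) (hbo : Odd b) :
    (1 + q ^ b) * (qnum q a) ^ (m - 1) *
        ∑ i ∈ Finset.range a, (-1 : ℝ) ^ i * q ^ ((i : ℝ) * (b : ℝ) * (h : ℝ)) *
          hqGenocchi h (q ^ a) m ((b : ℝ) * x + (b : ℝ) * (i : ℝ) / (a : ℝ)) =
      (1 + q ^ a) * (qnum q b) ^ (m - 1) *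
        ∑ i ∈ Finset.range b, (-1 : ℝ) ^ i * q ^ ((i : ℝ) * (a : ℝ) * (h : ℝ)) *
          hqGenocchi h (q ^ b) m ((a : ℝ) * x + (a : ℝ) * (i : ℝ) / (b : ℝ)) := by
  rw [qnum_pow_mul_sum_alternating_hqGenocchi hq0 hq1 h m hao,
    qnum_pow_mul_sum_alternating_hqGenocchi hq0 hq1 h m hbo, mul_comm (b : ℝ)]
  congr 1
  · ring
  · exact sum_congr rfl fun k _ ↦ by ring

theorem statement13 (q : ℝ) (hq0 : 0 < q) (hq1 : q < 1) (h : ℤ) (hh : 1 ≤ h)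
    (x : ℝ) (hx : 0 < x) (m : ℕ) (hm : 1 ≤ m) (a b : ℕ) (ha : 0 < a) (hb : 0 < b)
    (hao : Odd a) (hbo : Odd b) :
    (1 + q ^ b) * (qnum q a) ^ (m - 1) *
        ∑ i ∈ Finset.range a, (-1 : ℝ) ^ i * q ^ ((i : ℝ) * (b : ℝ) * (h : ℝ)) *
          hqGenocchi h (q ^ a) m ((b : ℝ) * x + (b : ℝ) * (i : ℝ) / (a : ℝ)) =
      (1 + q ^ a) * (qnum q b) ^ (m - 1) *
        ∑ i ∈ Finset.range b, (-1 : ℝ) ^ i * q ^ ((i : ℝ) * (a : ℝ) * (h : ℝ)) *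
          hqGenocchi h (q ^ b) m ((a : ℝ) * x + (a : ℝ) * (i : ℝ) / (b : ℝ)) :=
  statement13_general q hq0 hq1 h x m a b hao hbo
end

section
/- Let q be a real number with 0 < q < 1, let h be an integer with h ≥ 1, let x be a real number with x > 0, let n be a natural number with n ≥ 1, and let a be an odd positive integer. Then G_n^{(h)}(x|q) = ([2]_q / [2]_{q^a}) · [a]_q^{n-1} · Σ_{i=0}^{a-1} (-1)^i · q^{ih} · G_n^{(h)}((x+i)/a | q^a). -/
/-!
Write `G_n^{(h)}(x|q) = n [2]_q (1-q)^{1-n} ∑_k c_k q^{kx}/(1+q^{h+k})`. Substituting `q^a` and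
`(x+i)/a` turns `(q^a)^{k(x+i)/a}` into `q^{kx} q^{ki}`, so after exchanging the sums the
weighted `i`-sum of the `k`-th term is `q^{kx}/(1 + r^a) · ∑_{i<a} (-r)^i` with `r = q^{h+k}`.
Since `a` is odd this alternating geometric sum equals `(1 + r^a)/(1 + r)`, which gives back the
`k`-th term for `q`; the prefactors `[2]_q/[2]_{q^a}` and `[a]_q^{n-1}` exactly convert the
normalising constant for `q^a` into the one for `q`.
-/

open Finset

theorem Odd.geom_sum_neg_eq {K : Type*} [Field K] {r : K} (hr : 1 + r ≠ 0) {a : ℕ} (ha : Odd a) :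
    ∑ i ∈ range a, (-r) ^ i = (1 + r ^ a) / (1 + r) := by
  have hr' : -r ≠ 1 := fun h => hr (by rw [← h]; ring)
  rw [geom_sum_eq hr', ha.neg_pow, ← neg_div_neg_eq]
  ring_nf

-- The factor `m` makes the `m = 0` branch of the definition redundant.
theorem hqGenocchi_eq_mul_sum (h : ℤ) (q : ℝ) (m : ℕ) (x : ℝ) :
    hqGenocchi h q m x = (m : ℝ) * (1 + q) / (1 - q) ^ (m - 1) *
      ∑ k ∈ range m, ((m - 1).choose k : ℝ) * (-1 : ℝ) ^ k *
        q ^ ((k : ℝ) * x) / (1 + q ^ ((h : ℝ) + (k : ℝ))) := by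
  unfold hqGenocchi
  split_ifs with hm <;> simp [hm]

theorem sum_alternating_rpow_distribution {q : ℝ} (hq : 0 < q) {a : ℕ} (ha : Odd a)
    (h k x : ℝ) :
    ∑ i ∈ range a, (-1 : ℝ) ^ i * q ^ ((i : ℝ) * h) *
        ((q ^ a) ^ (k * ((x + i) / a)) / (1 + (q ^ a) ^ (h + k))) =
      q ^ (k * x) / (1 + q ^ (h + k)) := by
  set r := q ^ (h + k)
  have ha0 : (a : ℝ) ≠ 0 := Nat.cast_ne_zero.mpr ha.pos.ne'
  have hden : (q ^ a) ^ (h + k) = r ^ a := by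
    rw [← Real.rpow_natCast_mul hq.le, mul_comm, Real.rpow_mul_natCast hq.le]
  have hnum : ∀ i : ℕ, q ^ ((i : ℝ) * h) * (q ^ a) ^ (k * ((x + i) / a)) =
      q ^ (k * x) * r ^ i := fun i => by
    rw [← Real.rpow_natCast_mul hq.le, ← Real.rpow_add hq, ← Real.rpow_mul_natCast hq.le,
      ← Real.rpow_add hq]
    congr 1
    field_simp
    ring
  have hterm : ∀ i : ℕ, (-1 : ℝ) ^ i * q ^ ((i : ℝ) * h) *
      ((q ^ a) ^ (k * ((x + i) / a)) / (1 + (q ^ a) ^ (h + k))) =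
      q ^ (k * x) / (1 + r ^ a) * (-r) ^ i := fun i => by
    rw [hden, neg_pow, mul_assoc, mul_div_assoc', hnum]
    ring
  have hr : 0 < r := Real.rpow_pos_of_pos hq _
  rw [sum_congr rfl fun i _ => hterm i, ← mul_sum, ha.geom_sum_neg_eq (by positivity)]
  field_simp

theorem sum_alternating_rpow_mul_sum_distribution {q : ℝ} (hq : 0 < q) {a : ℕ} (ha : Odd a)
    (h x : ℝ) (s : Finset ℕ) (f : ℕ → ℝ) :
    ∑ i ∈ range a, (-1 : ℝ) ^ i * q ^ ((i : ℝ) * h) *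
        ∑ k ∈ s, f k * (q ^ a) ^ ((k : ℝ) * ((x + i) / a)) / (1 + (q ^ a) ^ (h + k)) =
      ∑ k ∈ s, f k * q ^ ((k : ℝ) * x) / (1 + q ^ (h + k)) := by
  simp only [mul_sum, mul_div_assoc]
  rw [sum_comm]
  refine sum_congr rfl fun k _ => ?_
  simp only [mul_left_comm _ (f k), ← mul_sum, sum_alternating_rpow_distribution hq ha]

theorem statement14_general (q : ℝ) (hq0 : 0 < q) (hq1 : q < 1) (h : ℤ)
    (x : ℝ) (n : ℕ) (a : ℕ) (hao : Odd a) :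
    hqGenocchi h q n x =
      (1 + q) / (1 + q ^ a) * (qnum q a) ^ (n - 1) *
        ∑ i ∈ Finset.range a, (-1 : ℝ) ^ i * q ^ ((i : ℝ) * (h : ℝ)) *
          hqGenocchi h (q ^ a) n ((x + (i : ℝ)) / (a : ℝ)) := by
  have hqa : q ^ a < 1 := pow_lt_one₀ hq0.le hq1 hao.pos.ne'
  simp only [hqGenocchi_eq_mul_sum, mul_left_comm _ ((n : ℝ) * (1 + q ^ a) / _), ← mul_sum,
    sum_alternating_rpow_mul_sum_distribution hq0 hao, qnum, Real.rpow_natCast]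
  have h1q : 1 - q ≠ 0 := by linarith
  have h1qa : 1 - q ^ a ≠ 0 := by linarith
  rw [← mul_assoc]
  congr 1
  rw [div_pow]
  field_simp

theorem statement14 (q : ℝ) (hq0 : 0 < q) (hq1 : q < 1) (h : ℤ) (hh : 1 ≤ h)
    (x : ℝ) (hx : 0 < x) (n : ℕ) (hn : 1 ≤ n) (a : ℕ) (ha : 0 < a) (hao : Odd a) :
    hqGenocchi h q n x =
      (1 + q) / (1 + q ^ a) * (qnum q a) ^ (n - 1) *
        ∑ i ∈ Finset.range a, (-1 : ℝ) ^ i * q ^ ((i : ℝ) * (h : ℝ)) *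
          hqGenocchi h (q ^ a) n ((x + (i : ℝ)) / (a : ℝ)) :=
  statement14_general q hq0 hq1 h x n a hao
end
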